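/- Let q be a complex number with |q| < 1. Then ∑_{n=1}^{∞} q^n/(1 − q^n) + ∑_{n=1}^{∞} q^{n(n+1)} / ((1 − q^n) (q;q)_n^2) = ∑_{n=1}^{∞} q^n / ((1 − q^n) (q;q)_n). -/

import Mathlib

/-!
Expand `1/(q;q)ₙ - 1 = ∑_{1 ≤ N ≤ n} q^{N²} [n, N]_q / (q;q)_N` (Durfee squares), so that
`∑ₙ qⁿ/(1 - qⁿ) (1/(q;q)ₙ - 1)` becomes a double sum over `1 ≤ N ≤ n`. Summing over `n` first, the
absorption identity `[n, N]_q / (1 - qⁿ) = [n - 1, N - 1]_q / (1 - q^N)` and the q-binomial series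
`∑ₘ [m + N - 1, N - 1]_q qᵐ = 1/(q;q)_N` give the column sums `q^{N(N+1)}/((1 - q^N) (q;q)_N²)`.
The interchange is justified by absolute convergence, which follows from
`exp (-|q|/(1 - |q|)²) ≤ |(q;q)ₙ| ≤ exp (|q|/(1 - |q|))`.
-/

open Finset

/-- The finite q-Pochhammer symbol `(q;q)_n = ∏_{k=1}^{n} (1 - q^k)`. -/
noncomputable def qPoch (a q : ℂ) (n : ℕ) : ℂ := ∏ k ∈ Finset.range n, (1 - a * q ^ k)

theorem qPoch_zero (a q : ℂ) : qPoch a q 0 = 1 := prod_range_zero _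

theorem qPoch_succ (a q : ℂ) (n : ℕ) : qPoch a q (n + 1) = qPoch a q n * (1 - a * q ^ n) :=
  prod_range_succ _ n

theorem qPoch_self_succ (q : ℂ) (n : ℕ) :
    qPoch q q (n + 1) = qPoch q q n * (1 - q ^ (n + 1)) := by
  rw [qPoch_succ, pow_succ']

def qBinom {R : Type*} [CommSemiring R] (q : R) : ℕ → ℕ → R
  | _, 0 => 1
  | 0, _ + 1 => 0
  | n + 1, k + 1 => qBinom q n k + q ^ (k + 1) * qBinom q n (k + 1)

section qBinom

variable {R : Type*} [CommSemiring R] (q : R)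

@[simp]
theorem qBinom_zero_right (n : ℕ) : qBinom q n 0 = 1 := by
  cases n <;> rfl

theorem qBinom_succ_succ (n k : ℕ) :
    qBinom q (n + 1) (k + 1) = qBinom q n k + q ^ (k + 1) * qBinom q n (k + 1) := rfl

theorem qBinom_eq_zero_of_lt {n k : ℕ} (h : n < k) : qBinom q n k = 0 := by
  induction n generalizing k with
  | zero => obtain ⟨k, rfl⟩ := Nat.exists_eq_succ_of_ne_zero h.ne'; rfl
  | succ n ih =>
    obtain ⟨k, rfl⟩ := Nat.exists_eq_succ_of_ne_zero (Nat.ne_zero_of_lt h)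
    rw [qBinom_succ_succ, ih (by omega), ih (by omega), mul_zero, add_zero]

end qBinom

theorem qBinom_mul_qPoch_mul_qPoch (q : ℂ) (m k : ℕ) :
    qBinom q (m + k) k * qPoch q q k * qPoch q q m = qPoch q q (m + k) := by
  induction k generalizing m with
  | zero => simp [qPoch_zero]
  | succ k ihk =>
    induction m with
    | zero =>
      have h := ihk 0
      rw [zero_add, qPoch_zero, mul_one] at h
      rw [zero_add, qBinom_succ_succ, qBinom_eq_zero_of_lt q k.lt_succ_self, qPoch_self_succ,
        qPoch_zero]
      linear_combination (1 - q ^ (k + 1)) * h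
    | succ m ihm =>
      have h := ihk (m + 1)
      rw [show m + (k + 1) = m + 1 + k by ring] at ihm
      rw [show m + 1 + (k + 1) = m + 1 + k + 1 by ring, qBinom_succ_succ,
        qPoch_self_succ q (m + 1 + k)]
      rw [qPoch_self_succ q k] at ihm ⊢
      rw [qPoch_self_succ q m] at h ⊢
      linear_combination (1 - q ^ (k + 1)) * h + q ^ (k + 1) * (1 - q ^ (m + 1)) * ihm

section Algebraic

variable {q : ℂ}

theorem qBinom_succ_mul_one_sub_pow (hq : ∀ n, qPoch q q n ≠ 0) (m k : ℕ) :
    qBinom q (m + k + 1) (k + 1) * (1 - q ^ (k + 1)) =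
      qBinom q (m + k) k * (1 - q ^ (m + k + 1)) := by
  refine mul_right_cancel₀ (mul_ne_zero (hq k) (hq m)) ?_
  have h₁ := qBinom_mul_qPoch_mul_qPoch q m (k + 1)
  have h₂ := qBinom_mul_qPoch_mul_qPoch q m k
  rw [qPoch_self_succ, ← add_assoc] at h₁
  rw [qPoch_self_succ q (m + k)] at h₁
  linear_combination h₁ - (1 - q ^ (m + k + 1)) * h₂

/-- The q-Pascal rule turns the `(ℓ + 1, j)` sum into the `(ℓ, j + 1)` one; for `j = 0` this is the
Durfee square identity. -/
theorem sum_range_pow_mul_qBinom_div_qPoch (hq : ∀ n, qPoch q q n ≠ 0) (ℓ j : ℕ) :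
    ∑ M ∈ range (ℓ + 1), q ^ (M * (M + j)) * qBinom q ℓ M / qPoch q q (M + j) =
      (qPoch q q (ℓ + j))⁻¹ := by
  induction ℓ generalizing j with
  | zero => simp
  | succ ℓ ih =>
    set a : ℕ → ℂ := fun M =>
      q ^ ((M + 1) * (M + j + 1)) * qBinom q ℓ M / qPoch q q (M + j + 1)
    set b : ℕ → ℂ := fun M => q ^ (M * (M + j + 1)) * qBinom q ℓ M / qPoch q q (M + j)
    have hab : ∀ M,
        a M + b M = q ^ (M * (M + (j + 1))) * qBinom q ℓ M / qPoch q q (M + (j + 1)) := by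
      intro M
      have h₁ := hq (M + j)
      have h₂ := hq (M + j + 1)
      simp only [a, b, ← add_assoc]
      field_simp
      rw [qPoch_self_succ]
      ring
    have hsplit : ∀ M, q ^ ((M + 1) * (M + 1 + j)) * qBinom q (ℓ + 1) (M + 1) /
        qPoch q q (M + 1 + j) = a M + b (M + 1) := by
      intro M
      simp only [a, b, qBinom_succ_succ]
      rw [show M + 1 + j = M + j + 1 by ring]
      ring
    have hb : b (ℓ + 1) = 0 := by simp [b, qBinom_eq_zero_of_lt q ℓ.lt_succ_self]
    calc _ = ∑ M ∈ range (ℓ + 1), (a M + b (M + 1)) + b 0 := by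
          rw [sum_range_succ', sum_congr rfl fun M _ => hsplit M]
          simp [b]
      _ = ∑ M ∈ range (ℓ + 1), (a M + b M) := by
          rw [sum_add_distrib, add_assoc, ← sum_range_succ' b, sum_range_succ b (ℓ + 1), hb,
            add_zero, sum_add_distrib]
      _ = _ := by
          rw [sum_congr rfl fun M _ => hab M, ih, ← add_assoc, add_right_comm]

end Algebraic

theorem Real.exp_neg_div_le_one_sub {x s : ℝ} (hx : 0 ≤ x) (hxs : x ≤ s) (hs : s < 1) :
    Real.exp (-(x / (1 - s))) ≤ 1 - x := by
  have hs' : 0 < 1 - s := by linarith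
  have key : 1 ≤ (1 - x) * (1 + x / (1 - s)) := by
    have : (1 - x) * (1 + x / (1 - s)) - 1 = x * (s - x) / (1 - s) := by field_simp; ring
    linarith [div_nonneg (mul_nonneg hx (sub_nonneg.2 hxs)) hs'.le]
  rw [Real.exp_neg, inv_le_iff_one_le_mul₀ (Real.exp_pos _)]
  calc 1 ≤ (1 - x) * (1 + x / (1 - s)) := key
    _ ≤ (1 - x) * Real.exp (x / (1 - s)) := by
      gcongr
      · linarith
      · linarith [Real.add_one_le_exp (x / (1 - s))]
    _ = _ := by ring

theorem geom_sum_range_le {r : ℝ} (h₀ : 0 ≤ r) (h₁ : r < 1) (n : ℕ) :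
    ∑ k ∈ range n, r ^ k ≤ (1 - r)⁻¹ := by
  simpa [← range_eq_Ico] using geom_sum_Ico_le_of_lt_one (m := 0) (n := n) h₀ h₁

section Analytic

variable {q : ℂ}

theorem norm_qPoch_le (a : ℂ) (hq : ‖q‖ < 1) (n : ℕ) :
    ‖qPoch a q n‖ ≤ Real.exp (‖a‖ / (1 - ‖q‖)) := by
  calc ‖qPoch a q n‖ = ∏ k ∈ range n, ‖1 - a * q ^ k‖ := norm_prod _ _
    _ ≤ ∏ k ∈ range n, Real.exp (‖a‖ * ‖q‖ ^ k) := by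
      refine prod_le_prod (fun _ _ => norm_nonneg _) fun k _ => ?_
      calc ‖1 - a * q ^ k‖ ≤ ‖(1 : ℂ)‖ + ‖a * q ^ k‖ := norm_sub_le _ _
        _ = ‖a‖ * ‖q‖ ^ k + 1 := by rw [norm_one, norm_mul, norm_pow, add_comm]
        _ ≤ _ := Real.add_one_le_exp _
    _ = Real.exp (‖a‖ * ∑ k ∈ range n, ‖q‖ ^ k) := by rw [mul_sum, Real.exp_sum]
    _ ≤ Real.exp (‖a‖ / (1 - ‖q‖)) := by
      rw [Real.exp_le_exp, div_eq_mul_inv]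
      exact mul_le_mul_of_nonneg_left (geom_sum_range_le (norm_nonneg q) hq n) (norm_nonneg a)

theorem exp_le_norm_qPoch {a : ℂ} (ha : ‖a‖ < 1) (hq : ‖q‖ < 1) (n : ℕ) :
    Real.exp (-(‖a‖ / ((1 - ‖a‖) * (1 - ‖q‖)))) ≤ ‖qPoch a q n‖ := by
  have hqk : ∀ k : ℕ, ‖q‖ ^ k ≤ 1 := fun k => pow_le_one₀ (norm_nonneg q) hq.le
  calc Real.exp (-(‖a‖ / ((1 - ‖a‖) * (1 - ‖q‖))))
      ≤ Real.exp (-(∑ k ∈ range n, ‖a‖ * ‖q‖ ^ k / (1 - ‖a‖))) := by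
        rw [Real.exp_le_exp, neg_le_neg_iff, ← sum_div, ← mul_sum, div_mul_eq_div_div_swap,
          div_le_div_iff_of_pos_right (by linarith), div_eq_mul_inv]
        exact mul_le_mul_of_nonneg_left (geom_sum_range_le (norm_nonneg q) hq n) (norm_nonneg a)
    _ = ∏ k ∈ range n, Real.exp (-(‖a‖ * ‖q‖ ^ k / (1 - ‖a‖))) := by
        rw [← sum_neg_distrib, Real.exp_sum]
    _ ≤ ∏ k ∈ range n, ‖1 - a * q ^ k‖ := by
        refine prod_le_prod (fun _ _ => (Real.exp_pos _).le) fun k _ => ?_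
        calc _ ≤ 1 - ‖a‖ * ‖q‖ ^ k := Real.exp_neg_div_le_one_sub (by positivity)
              (mul_le_of_le_one_right (norm_nonneg a) (hqk k)) ha
          _ ≤ ‖1 - a * q ^ k‖ := by
              simpa [norm_mul, norm_pow] using norm_sub_norm_le (1 : ℂ) (a * q ^ k)
    _ = ‖qPoch a q n‖ := (norm_prod _ _).symm

theorem exists_pos_le_norm_qPoch (hq : ‖q‖ < 1) : ∃ c > 0, ∀ n, c ≤ ‖qPoch q q n‖ :=
  ⟨_, Real.exp_pos _, exp_le_norm_qPoch hq hq⟩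

theorem qPoch_ne_zero (hq : ‖q‖ < 1) (n : ℕ) : qPoch q q n ≠ 0 :=
  norm_pos_iff.1 ((Real.exp_pos _).trans_le (exp_le_norm_qPoch hq hq n))

theorem one_sub_norm_le_norm_one_sub_pow (hq : ‖q‖ < 1) (n : ℕ) :
    1 - ‖q‖ ≤ ‖1 - q ^ (n + 1)‖ := by
  have : ‖q‖ ^ (n + 1) ≤ ‖q‖ := pow_le_of_le_one (norm_nonneg q) hq.le n.succ_ne_zero
  have := norm_sub_norm_le (1 : ℂ) (q ^ (n + 1))
  rw [norm_one, norm_pow] at this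
  linarith

theorem one_sub_pow_ne_zero (hq : ‖q‖ < 1) (n : ℕ) : 1 - q ^ (n + 1) ≠ 0 :=
  norm_pos_iff.1 ((sub_pos.2 hq).trans_le (one_sub_norm_le_norm_one_sub_pow hq n))

theorem exists_norm_qBinom_le (hq : ‖q‖ < 1) : ∃ B, ∀ n k, ‖qBinom q n k‖ ≤ B := by
  obtain ⟨c, hc, hcP⟩ := exists_pos_le_norm_qPoch hq
  refine ⟨Real.exp (‖q‖ / (1 - ‖q‖)) / (c * c), fun n k => ?_⟩
  rcases lt_or_ge n k with hnk | hkn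
  · rw [qBinom_eq_zero_of_lt q hnk, norm_zero]
    positivity
  obtain ⟨m, rfl⟩ := Nat.exists_eq_add_of_le' hkn
  have h := congrArg norm (qBinom_mul_qPoch_mul_qPoch q m k)
  rw [norm_mul, norm_mul, mul_assoc] at h
  rw [le_div_iff₀ (by positivity)]
  calc ‖qBinom q (m + k) k‖ * (c * c)
        ≤ ‖qBinom q (m + k) k‖ * (‖qPoch q q k‖ * ‖qPoch q q m‖) := by
        gcongr
        · exact hcP k
        · exact hcP m
    _ = ‖qPoch q q (m + k)‖ := h
    _ ≤ _ := norm_qPoch_le q hq _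

end Analytic

section Series

variable {q : ℂ}

theorem summable_qBinom_mul_pow (hq : ‖q‖ < 1) (K : ℕ) :
    Summable fun m => qBinom q (m + K) K * q ^ m := by
  obtain ⟨B, hB⟩ := exists_norm_qBinom_le hq
  refine .of_norm_bounded ((summable_geometric_of_lt_one (norm_nonneg q) hq).mul_left B)
    fun m => ?_
  rw [norm_mul, norm_pow]
  exact mul_le_mul_of_nonneg_right (hB _ _) (by positivity)

theorem hasSum_qBinom_mul_pow (hq : ‖q‖ < 1) (K : ℕ) :
    HasSum (fun m => qBinom q (m + K) K * q ^ m) (qPoch q q (K + 1))⁻¹ := by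
  induction K with
  | zero =>
    simpa [qPoch_succ, qPoch_zero] using hasSum_geometric_of_norm_lt_one hq
  | succ K ih =>
    obtain ⟨S, hS⟩ := summable_qBinom_mul_pow hq (K + 1)
    have hrec : HasSum (fun m => qBinom q (m + 1 + (K + 1)) (K + 1) * q ^ (m + 1))
        ((qPoch q q (K + 1))⁻¹ - qBinom q K K + q ^ (K + 2) * S) := by
      have h := ((hasSum_nat_add_iff' 1).2 ih).add (hS.mul_left (q ^ (K + 2)))
      simp only [range_one, sum_singleton, zero_add, pow_zero, mul_one] at h
      refine h.congr_fun fun m => ?_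
      rw [show m + 1 + (K + 1) = m + 1 + K + 1 by ring, qBinom_succ_succ,
        show m + 1 + K = m + (K + 1) by ring]
      ring
    have hS₀ : qBinom q (K + 1) (K + 1) = qBinom q K K := by
      rw [qBinom_succ_succ, qBinom_eq_zero_of_lt q K.lt_succ_self, mul_zero, add_zero]
    have hSeq := ((hasSum_nat_add_iff' 1).2 hS).unique hrec
    simp only [range_one, sum_singleton, zero_add, pow_zero, mul_one, hS₀] at hSeq
    have hS' : S * (1 - q ^ (K + 1 + 1)) = (qPoch q q (K + 1))⁻¹ := by linear_combination hSeq
    rwa [qPoch_self_succ, mul_inv, ← hS', mul_inv_cancel_right₀ (one_sub_pow_ne_zero hq (K + 1))]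

theorem norm_pow_div_one_sub_pow_le (hq : ‖q‖ < 1) (n : ℕ) :
    ‖q ^ (n + 1) / (1 - q ^ (n + 1))‖ ≤ ‖q‖ ^ n / (1 - ‖q‖) := by
  have hn : ‖q‖ ^ (n + 1) ≤ ‖q‖ ^ n := pow_le_pow_of_le_one (norm_nonneg q) hq.le n.le_succ
  rw [norm_div, norm_pow]
  gcongr
  exact one_sub_norm_le_norm_one_sub_pow hq n

theorem summable_pow_div_one_sub_pow (hq : ‖q‖ < 1) :
    Summable fun n => q ^ (n + 1) / (1 - q ^ (n + 1)) :=
  .of_norm_bounded ((summable_geometric_of_lt_one (norm_nonneg q) hq).div_const _)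
    (norm_pow_div_one_sub_pow_le hq)

theorem hasSum_pow_div_one_sub_pow_mul_qBinom (hq : ‖q‖ < 1) (N : ℕ) :
    HasSum (fun n => q ^ (n + 1) / (1 - q ^ (n + 1)) * qBinom q (n + 1) (N + 1))
      (q ^ (N + 1) / ((1 - q ^ (N + 1)) * qPoch q q (N + 1))) := by
  have hhead : ∑ n ∈ range N, q ^ (n + 1) / (1 - q ^ (n + 1)) * qBinom q (n + 1) (N + 1) = 0 :=
    sum_eq_zero fun n hn => by
      rw [qBinom_eq_zero_of_lt q (by simpa using hn), mul_zero]
  rw [← hasSum_nat_add_iff' N, hhead, sub_zero]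
  have h₁ := one_sub_pow_ne_zero hq N
  have h := (hasSum_qBinom_mul_pow hq N).mul_left (q ^ (N + 1) / (1 - q ^ (N + 1)))
  rw [← div_eq_mul_inv, div_div] at h
  refine h.congr_fun fun m => ?_
  have h₂ := one_sub_pow_ne_zero hq (m + N)
  have habs := qBinom_succ_mul_one_sub_pow (qPoch_ne_zero hq) m N
  field_simp
  linear_combination q ^ (m + N + 1) * habs

/-- The `(n + 1, N + 1)` term of `∑ₙ qⁿ/(1 - qⁿ) (1/(q;q)ₙ - 1)` after expanding `1/(q;q)ₙ` by the
Durfee square identity. -/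
noncomputable def durfeeLambertTerm (q : ℂ) (n N : ℕ) : ℂ :=
  q ^ (n + 1) / (1 - q ^ (n + 1)) *
    (q ^ ((N + 1) * (N + 1)) * qBinom q (n + 1) (N + 1) / qPoch q q (N + 1))

theorem summable_durfeeLambertTerm (hq : ‖q‖ < 1) :
    Summable (Function.uncurry (durfeeLambertTerm q)) := by
  obtain ⟨B, hB⟩ := exists_norm_qBinom_le hq
  obtain ⟨c, hc, hcP⟩ := exists_pos_le_norm_qPoch hq
  have hB₀ : 0 ≤ B := (norm_nonneg _).trans (hB 0 0)
  have hr₁ : 0 < 1 - ‖q‖ := sub_pos.2 hq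
  have hgeom := summable_geometric_of_lt_one (norm_nonneg q) hq
  refine .of_norm_bounded (g := fun p : ℕ × ℕ => ‖q‖ ^ p.1 / (1 - ‖q‖) * (‖q‖ ^ p.2 * B / c))
    ((hgeom.div_const _).mul_of_nonneg ((hgeom.mul_right B).div_const c)
      (fun _ => by positivity) fun _ => by positivity) fun ⟨n, N⟩ => ?_
  have hN : ‖q‖ ^ ((N + 1) * (N + 1)) ≤ ‖q‖ ^ N :=
    pow_le_pow_of_le_one (norm_nonneg q) hq.le (by nlinarith)
  rw [Function.uncurry_apply_pair, durfeeLambertTerm, norm_mul]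
  gcongr ?_ * ?_
  · exact norm_pow_div_one_sub_pow_le hq n
  · rw [norm_div, norm_mul, norm_pow]
    gcongr
    · exact hB _ _
    · exact hcP _

theorem tsum_durfeeLambertTerm_left (hq : ‖q‖ < 1) (n : ℕ) :
    ∑' N, durfeeLambertTerm q n N =
      q ^ (n + 1) / ((1 - q ^ (n + 1)) * qPoch q q (n + 1)) - q ^ (n + 1) / (1 - q ^ (n + 1)) := by
  have hdurfee := sum_range_pow_mul_qBinom_div_qPoch (qPoch_ne_zero hq) (n + 1) 0
  simp only [add_zero, sum_range_succ' _ (n + 1), zero_mul, pow_zero, qBinom_zero_right,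
    qPoch_zero, div_one, mul_one] at hdurfee
  rw [tsum_eq_sum (s := range (n + 1)) fun N hN => ?_]
  · simp only [durfeeLambertTerm]
    rw [← mul_sum, eq_sub_of_add_eq hdurfee]
    have := one_sub_pow_ne_zero hq n
    have := qPoch_ne_zero hq (n + 1)
    field_simp
  · rw [durfeeLambertTerm, qBinom_eq_zero_of_lt q (by simpa using hN)]
    simp

theorem hasSum_durfeeLambertTerm_right (hq : ‖q‖ < 1) (N : ℕ) :
    HasSum (fun n => durfeeLambertTerm q n N)
      (q ^ ((N + 1) * (N + 2)) / ((1 - q ^ (N + 1)) * qPoch q q (N + 1) ^ 2)) := by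
  have h := (hasSum_pow_div_one_sub_pow_mul_qBinom hq N).mul_right
    (q ^ ((N + 1) * (N + 1)) / qPoch q q (N + 1))
  rw [show q ^ ((N + 1) * (N + 2)) / ((1 - q ^ (N + 1)) * qPoch q q (N + 1) ^ 2) =
      q ^ (N + 1) / ((1 - q ^ (N + 1)) * qPoch q q (N + 1)) *
        (q ^ ((N + 1) * (N + 1)) / qPoch q q (N + 1)) by
    have := one_sub_pow_ne_zero hq N
    have := qPoch_ne_zero hq (N + 1)
    field_simp
    ring]
  exact h.congr_fun fun n => by rw [durfeeLambertTerm]; ring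

end Series

/-- Corollary 2.10, generating function form: for |q| < 1,
∑_{n≥1} q^n/(1 − q^n) + ∑_{n≥1} q^{n(n+1)}/((1 − q^n)(q;q)_n²)
  = ∑_{n≥1} q^n/((1 − q^n)(q;q)_n). -/
theorem stmt11 (q : ℂ) (hq : ‖q‖ < 1) :
    ∑' n : ℕ, q ^ (n + 1) / (1 - q ^ (n + 1)) +
      ∑' n : ℕ, q ^ ((n + 1) * (n + 2)) /
        ((1 - q ^ (n + 1)) * qPoch q q (n + 1) ^ 2) =
      ∑' n : ℕ, q ^ (n + 1) / ((1 - q ^ (n + 1)) * qPoch q q (n + 1)) := by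
  have hsum := summable_durfeeLambertTerm hq
  have hrows : Summable fun n => q ^ (n + 1) / ((1 - q ^ (n + 1)) * qPoch q q (n + 1)) -
      q ^ (n + 1) / (1 - q ^ (n + 1)) := by
    simpa only [Function.uncurry_apply_pair, tsum_durfeeLambertTerm_left hq] using hsum.prod
  calc _ = ∑' n : ℕ, q ^ (n + 1) / (1 - q ^ (n + 1)) + ∑' N, ∑' n, durfeeLambertTerm q n N := by
        simp only [(hasSum_durfeeLambertTerm_right hq _).tsum_eq]
    _ = ∑' n : ℕ, q ^ (n + 1) / (1 - q ^ (n + 1)) + ∑' n, ∑' N, durfeeLambertTerm q n N := by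
        rw [hsum.tsum_comm]
    _ = _ := by
        simp only [tsum_durfeeLambertTerm_left hq]
        rw [← (summable_pow_div_one_sub_pow hq).tsum_add hrows]
        simp only [add_sub_cancel]
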